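/- Soundness of the translation: if Γ ⊢ φ in P[⊥_w], then Γ* ⊢ φ* in P[∨_p], where (·)* translates primal implication φ→ψ to (⊥ ∨_p φ*) → ψ* and commutes with all other connectives. -/

import Mathlib

/-- Infons of P[∨_p]: atoms, ⊤, ⊥ (an ordinary atom here), conjunction,
primal implication and primal disjunction. -/
inductive Infon : Type
  | atom : ℕ → Infon
  | top : Infon
  | bot : Infon
  | and : Infon → Infon → Infon
  | imp : Infon → Infon → Infon
  | orp : Infon → Infon → Infon
deriving DecidableEq

/-- An infon lies in the language of P[⊥_w], i.e. contains no primal disjunction. -/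
def OrFree : Infon → Prop
  | .and φ ψ => OrFree φ ∧ OrFree ψ
  | .imp φ ψ => OrFree φ ∧ OrFree ψ
  | .orp _ _ => False
  | _ => True

/-- Derivability in the basic primal infon logic P (no rules for ⊥ or ∨_p). -/
inductive DerP : Set Infon → Infon → Prop
  | top (Γ : Set Infon) : DerP Γ .top
  | id (φ : Infon) : DerP {φ} φ
  | weak {Γ φ} (Δ : Set Infon) : DerP Γ φ → DerP (Γ ∪ Δ) φ
  | cut {Γ φ ψ} : DerP Γ φ → DerP (insert φ Γ) ψ → DerP Γ ψ
  | andI {Γ φ ψ} : DerP Γ φ → DerP Γ ψ → DerP Γ (.and φ ψ)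
  | andE1 {Γ φ ψ} : DerP Γ (.and φ ψ) → DerP Γ φ
  | andE2 {Γ φ ψ} : DerP Γ (.and φ ψ) → DerP Γ ψ
  | impI {Γ ψ} (φ : Infon) : DerP Γ ψ → DerP Γ (.imp φ ψ)
  | impE {Γ φ ψ} : DerP Γ φ → DerP Γ (.imp φ ψ) → DerP Γ ψ

/-- Derivability in P[⊥_w]: P plus the weak ⊥-elimination rule. -/
inductive DerW : Set Infon → Infon → Prop
  | top (Γ : Set Infon) : DerW Γ .top
  | id (φ : Infon) : DerW {φ} φ
  | weak {Γ φ} (Δ : Set Infon) : DerW Γ φ → DerW (Γ ∪ Δ) φ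
  | cut {Γ φ ψ} : DerW Γ φ → DerW (insert φ Γ) ψ → DerW Γ ψ
  | andI {Γ φ ψ} : DerW Γ φ → DerW Γ ψ → DerW Γ (.and φ ψ)
  | andE1 {Γ φ ψ} : DerW Γ (.and φ ψ) → DerW Γ φ
  | andE2 {Γ φ ψ} : DerW Γ (.and φ ψ) → DerW Γ ψ
  | impI {Γ ψ} (φ : Infon) : DerW Γ ψ → DerW Γ (.imp φ ψ)
  | impE {Γ φ ψ} : DerW Γ φ → DerW Γ (.imp φ ψ) → DerW Γ ψ
  | botEw {Γ φ ψ} : DerW Γ .bot → DerW Γ (.imp φ ψ) → DerW Γ ψ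

/-- Derivability in P[∨_p]: P plus the two introduction rules for primal disjunction
(and no elimination rule; ⊥ is an ordinary atom). -/
inductive DerO : Set Infon → Infon → Prop
  | top (Γ : Set Infon) : DerO Γ .top
  | id (φ : Infon) : DerO {φ} φ
  | weak {Γ φ} (Δ : Set Infon) : DerO Γ φ → DerO (Γ ∪ Δ) φ
  | cut {Γ φ ψ} : DerO Γ φ → DerO (insert φ Γ) ψ → DerO Γ ψ
  | andI {Γ φ ψ} : DerO Γ φ → DerO Γ ψ → DerO Γ (.and φ ψ)
  | andE1 {Γ φ ψ} : DerO Γ (.and φ ψ) → DerO Γ φ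
  | andE2 {Γ φ ψ} : DerO Γ (.and φ ψ) → DerO Γ ψ
  | impI {Γ ψ} (φ : Infon) : DerO Γ ψ → DerO Γ (.imp φ ψ)
  | impE {Γ φ ψ} : DerO Γ φ → DerO Γ (.imp φ ψ) → DerO Γ ψ
  | orI1 {Γ φ₁} (φ₂ : Infon) : DerO Γ φ₁ → DerO Γ (.orp φ₁ φ₂)
  | orI2 {Γ φ₂} (φ₁ : Infon) : DerO Γ φ₂ → DerO Γ (.orp φ₁ φ₂)

/-- The translation (·)*: primal implication φ→ψ goes to (⊥ ∨_p φ*) → ψ*,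
all other connectives are translated homomorphically. -/
def star : Infon → Infon
  | .and φ ψ => .and (star φ) (star ψ)
  | .imp φ ψ => .imp (.orp .bot (star φ)) (star ψ)
  | .orp φ ψ => .orp (star φ) (star ψ)
  | φ => φ

/- The antecedent `⊥ ∨_p φ*` of a translated implication can be introduced either from `φ*`
(simulating →E) or from `⊥` (simulating weak ⊥-elimination); every other rule of P[⊥_w] is
a rule of P[∨_p] and commutes with `star`. -/

theorem DerO.impE_of_orI2 {Γ : Set Infon} {φ ψ : Infon} (hφ : DerO Γ φ)
    (h : DerO Γ (.imp (.orp .bot φ) ψ)) : DerO Γ ψ :=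
  (hφ.orI2 .bot).impE h

theorem DerO.impE_of_bot {Γ : Set Infon} {φ ψ : Infon} (hbot : DerO Γ .bot)
    (h : DerO Γ (.imp (.orp .bot φ) ψ)) : DerO Γ ψ :=
  (hbot.orI1 φ).impE h

theorem star_sound_general (Γ : Set Infon) (φ : Infon)
    (h : DerW Γ φ) : DerO (star '' Γ) (star φ) := by
  induction h with
  | top Γ => exact DerO.top _
  | id φ => simpa only [Set.image_singleton] using DerO.id (star φ)
  | weak Δ _ ih => simpa only [Set.image_union] using ih.weak (star '' Δ)
  | cut _ _ ih₁ ih₂ => exact ih₁.cut (by simpa only [Set.image_insert_eq] using ih₂)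
  | andI _ _ ih₁ ih₂ => exact ih₁.andI ih₂
  | andE1 _ ih => exact ih.andE1
  | andE2 _ ih => exact ih.andE2
  | impI φ _ ih => exact ih.impI _
  | impE _ _ ih₁ ih₂ => exact ih₁.impE_of_orI2 ih₂
  | botEw _ _ ih₁ ih₂ => exact ih₁.impE_of_bot ih₂

/-- Soundness of the translation: if Γ ⊢ φ in P[⊥_w] (over the ∨-free language),
then Γ* ⊢ φ* in P[∨_p]. -/
theorem star_sound (Γ : Set Infon) (φ : Infon)
    (hΓ : ∀ ψ ∈ Γ, OrFree ψ) (hφ : OrFree φ)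
    (h : DerW Γ φ) : DerO (star '' Γ) (star φ) :=
  star_sound_general Γ φ h
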